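/- For all positive integers k and n, every graph G with 2-treedepth at most k that contains a path on n vertices as a subgraph contains an induced path on at least n^{1/(k-1)}/2 vertices (where for k = 1 the statement holds trivially since such G is edgeless). -/

import Mathlib

open Classical

variable {V : Type}

/-- Reachability within a vertex subset `s` of the graph `G`. -/
def ReachIn (G : SimpleGraph V) (s : Finset V) (u v : V) : Prop :=
  Relation.ReflTransGen (fun a b => a ∈ s ∧ b ∈ s ∧ G.Adj a b) u v

/-- The induced subgraph of `G` on `s` is (nonempty and) connected. -/
def ConnIn (G : SimpleGraph V) (s : Finset V) : Prop :=
  s.Nonempty ∧ ∀ u ∈ s, ∀ v ∈ s, ReachIn G s u v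

/-- The vertex set of the connected component of `v` in the induced subgraph on `s`. -/
noncomputable def compIn (G : SimpleGraph V) (s : Finset V) (v : V) : Finset V :=
  s.filter (fun u => ReachIn G s v u)

/-- Fuel-based recursion computing the treedepth of the induced subgraph of `G` on `s`
(correct whenever the fuel is at least `s.card`): treedepth of the null graph is `0`;
for a connected graph it is `1 + min_v td(G - v)`; otherwise the max over components. -/
noncomputable def tdAux (G : SimpleGraph V) : ℕ → Finset V → ℕ
  | 0, _ => 0
  | n+1, s =>
    if hs : s = ∅ then 0
    else if ConnIn G s then
      1 + s.inf' (Finset.nonempty_of_ne_empty hs) (fun v => tdAux G n (s.erase v))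
    else
      s.sup (fun v => tdAux G n (compIn G s v))

/-- The treedepth of the induced subgraph of `G` on the vertex set `s`. -/
noncomputable def tdOn (G : SimpleGraph V) (s : Finset V) : ℕ := tdAux G s.card s

/-- The treedepth of a finite graph. -/
noncomputable def td (G : SimpleGraph V) [Fintype V] : ℕ := tdOn G Finset.univ

/-- `B` induces a block-like graph: connected and with no cut vertex
(removing any vertex leaves it connected, when nonempty). -/
def IsBlockSet (G : SimpleGraph V) (B : Finset V) : Prop :=
  ConnIn G B ∧ ∀ v ∈ B, (B.erase v).Nonempty → ConnIn G (B.erase v)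

/-- `B` is a block of the induced subgraph of `G` on `s`: a maximal connected
subgraph without a cut vertex. -/
def IsBlock (G : SimpleGraph V) (s B : Finset V) : Prop :=
  B ⊆ s ∧ IsBlockSet G B ∧ ∀ B' : Finset V, B ⊆ B' → B' ⊆ s → IsBlockSet G B' → B' = B

/-- Fuel-based recursion computing the 2-treedepth of the induced subgraph of `G` on `s`
(correct whenever the fuel is at least `s.card`): `0` for the null graph;
`1 + min_v td₂(G - v)` if the graph is a block; the max over blocks otherwise. -/
noncomputable def td2Aux (G : SimpleGraph V) : ℕ → Finset V → ℕ
  | 0, _ => 0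
  | n+1, s =>
    if hs : s = ∅ then 0
    else if IsBlockSet G s then
      1 + s.inf' (Finset.nonempty_of_ne_empty hs) (fun v => td2Aux G n (s.erase v))
    else
      (s.powerset.filter (fun B => IsBlock G s B)).sup (fun B => td2Aux G n B)

/-- The 2-treedepth of the induced subgraph of `G` on `s`. -/
noncomputable def td2On (G : SimpleGraph V) (s : Finset V) : ℕ := td2Aux G s.card s

/-- The 2-treedepth of a finite graph. -/
noncomputable def td2 (G : SimpleGraph V) [Fintype V] : ℕ := td2On G Finset.univ

/-- `G` contains a path on `m` vertices as a subgraph. -/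
def HasPathOn (G : SimpleGraph V) (m : ℕ) : Prop :=
  ∃ p : Fin m → V, Function.Injective p ∧
    ∀ i : Fin m, ∀ h : i.1 + 1 < m, G.Adj (p i) (p ⟨i.1 + 1, h⟩)

/-- `G` contains an induced path on `m` vertices: `m` distinct vertices with
adjacency exactly between consecutive ones. -/
def HasInducedPathOn (G : SimpleGraph V) (m : ℕ) : Prop :=
  ∃ p : Fin m → V, Function.Injective p ∧
    ∀ i j : Fin m, G.Adj (p i) (p j) ↔ (i.1 + 1 = j.1 ∨ j.1 + 1 = i.1)

/-- `G` is `P_t`-free: it has no induced path on `t` vertices. -/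
def PtFree (G : SimpleGraph V) (t : ℕ) : Prop := ¬ HasInducedPathOn G t

/-!
Induction on `k`, in the polynomial form `n ≤ (2m)^(k-1)`. Shortcutting the given path `P` along
chords yields an induced path `p₀ = x₀, x₁, …, x_L = p_{n-1}`, whose vertices cut `P` into `L`
segments. A segment closed up by its chord `xᵢxᵢ₊₁` is a cycle, so it lies in a block `B`, and
`td₂(B) ≤ td₂(G) ≤ k`. The longest segment has at least `(n-1)/L` edges; deleting the vertex `v`
with `td₂(B - v) ≤ k - 1` leaves half of it as a path in `B - v`, so induction yields an induced
path on `m'` vertices with `(n-1)/(2L) ≤ (2m')^(k-2)`, and `m = max (L+1) m'` works.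
-/

section Reach

variable {G : SimpleGraph V} {s t : Finset V} {u v w : V}

lemma ReachIn.mono (hst : s ⊆ t) (h : ReachIn G s u v) : ReachIn G t u v :=
  Relation.ReflTransGen.mono (fun _ _ hab => ⟨hst hab.1, hst hab.2.1, hab.2.2⟩) _ _ h

lemma ReachIn.trans (h₁ : ReachIn G s u v) (h₂ : ReachIn G s v w) : ReachIn G s u w :=
  Relation.ReflTransGen.trans h₁ h₂

lemma ReachIn.symm (h : ReachIn G s u v) : ReachIn G s v u :=
  (@Relation.ReflTransGen.stdSymm _ _ ⟨fun _ _ hab => ⟨hab.2.1, hab.1, hab.2.2.symm⟩⟩).symm _ _ h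

lemma ReachIn.single (hu : u ∈ s) (hv : v ∈ s) (h : G.Adj u v) : ReachIn G s u v :=
  Relation.ReflTransGen.single ⟨hu, hv, h⟩

lemma connIn_of_forall_reachIn (hu : u ∈ s) (h : ∀ v ∈ s, ReachIn G s u v) : ConnIn G s :=
  ⟨⟨u, hu⟩, fun _ hv _ hw => (h _ hv).symm.trans (h _ hw)⟩

lemma connIn_of_card_le_one (hs : s.Nonempty) (h : s.card ≤ 1) : ConnIn G s := by
  obtain ⟨u, hu⟩ := hs
  refine connIn_of_forall_reachIn hu fun v hv => ?_
  rw [Finset.card_le_one.mp h u hu v hv]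
  exact Relation.ReflTransGen.refl

lemma reachIn_of_adj_succ {p : ℕ → V} {i j : ℕ} (hij : i ≤ j)
    (hadj : ∀ l, i ≤ l → l < j → G.Adj (p l) (p (l + 1)))
    (hs : ∀ l, i ≤ l → l ≤ j → p l ∈ s) : ReachIn G s (p i) (p j) := by
  induction j, hij using Nat.le_induction with
  | base => exact Relation.ReflTransGen.refl
  | succ j hij ih =>
    exact (ih (fun l h₁ h₂ => hadj l h₁ (by omega)) (fun l h₁ h₂ => hs l h₁ (by omega))).tail
      ⟨hs j hij (by omega), hs (j + 1) (by omega) le_rfl, hadj j hij (by omega)⟩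

end Reach

section Blocks

variable {G : SimpleGraph V} {s : Finset V} {u v : V}

lemma isBlockSet_of_card_le_two (hc : ConnIn G s) (h : s.card ≤ 2) : IsBlockSet G s :=
  ⟨hc, fun _ hv hne => connIn_of_card_le_one hne (by rw [Finset.card_erase_of_mem hv]; omega)⟩

lemma isBlockSet_singleton (v : V) : IsBlockSet G {v} :=
  isBlockSet_of_card_le_two (connIn_of_card_le_one (Finset.singleton_nonempty v) (by simp))
    (by simp)

lemma isBlockSet_pair (h : G.Adj u v) : IsBlockSet G {u, v} := by
  refine isBlockSet_of_card_le_two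
    (connIn_of_forall_reachIn (Finset.mem_insert_self u {v}) fun w hw => ?_) Finset.card_le_two
  rcases Finset.mem_insert.mp hw with rfl | hw
  · exact Relation.ReflTransGen.refl
  · rw [Finset.mem_singleton.mp hw]
    exact ReachIn.single (by simp) (by simp) h

lemma exists_isBlock_superset {C : Finset V} (hC : IsBlockSet G C) (hCs : C ⊆ s) :
    ∃ B, IsBlock G s B ∧ C ⊆ B := by
  set F := s.powerset.filter fun B => IsBlockSet G B ∧ C ⊆ B
  have hCF : C ∈ F := Finset.mem_filter.mpr ⟨Finset.mem_powerset.mpr hCs, hC, le_rfl⟩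
  obtain ⟨B, hBF, hmax⟩ := Finset.exists_max_image F Finset.card ⟨C, hCF⟩
  obtain ⟨hBs, hB, hCB⟩ := Finset.mem_filter.mp hBF
  refine ⟨B, ⟨Finset.mem_powerset.mp hBs, hB, fun B' hBB' hB's hB' => ?_⟩, hCB⟩
  have hB'F : B' ∈ F :=
    Finset.mem_filter.mpr ⟨Finset.mem_powerset.mpr hB's, hB', hCB.trans hBB'⟩
  exact (Finset.eq_of_subset_of_card_le hBB' (hmax B' hB'F)).symm

end Blocks

section PathSeq

variable {G : SimpleGraph V}

def IsPathSeq (G : SimpleGraph V) (p : ℕ → V) (n : ℕ) : Prop :=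
  Set.InjOn p (Set.Iio n) ∧ ∀ i, i + 1 < n → G.Adj (p i) (p (i + 1))

variable {p : ℕ → V} {n : ℕ}

lemma exists_isPathSeq_of_hasPathOn (hn : 0 < n) (h : HasPathOn G n) :
    ∃ p : ℕ → V, IsPathSeq G p n := by
  obtain ⟨p, hinj, hadj⟩ := h
  refine ⟨fun i => if hi : i < n then p ⟨i, hi⟩ else p ⟨0, hn⟩, fun i hi j hj hij => ?_,
    fun i hi => ?_⟩
  · simp only [dif_pos (Set.mem_Iio.mp hi), dif_pos (Set.mem_Iio.mp hj)] at hij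
    exact Fin.val_eq_of_eq (hinj hij)
  · simp only [dif_pos hi, dif_pos (show i < n by omega)]
    exact hadj ⟨i, _⟩ hi

lemma IsPathSeq.shift (hp : IsPathSeq G p n) {o n' : ℕ} (h : o + n' ≤ n) :
    IsPathSeq G (fun t => p (o + t)) n' := by
  refine ⟨fun i hi j hj hij => ?_, fun t ht => hp.2 (o + t) (by omega)⟩
  have := hp.1 (Set.mem_Iio.mpr (show o + i < n by simp at hi; omega))
    (Set.mem_Iio.mpr (show o + j < n by simp at hj; omega)) hij
  omega

lemma exists_subpath_avoiding {d : ℕ} (hp : Set.InjOn p (Set.Iio (d + 1))) (v : V) :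
    ∃ o n', o + n' ≤ d + 1 ∧ d ≤ 2 * n' ∧ ∀ t < n', p (o + t) ≠ v := by
  by_cases hv : ∃ c ≤ d, p c = v
  · obtain ⟨c, hc, rfl⟩ := hv
    have hne : ∀ i ≤ d, i ≠ c → p i ≠ p c := fun i hi hic h =>
      hic (hp (Set.mem_Iio.mpr (by omega)) (Set.mem_Iio.mpr (by omega)) h)
    rcases le_total d (2 * c) with h | h
    · exact ⟨0, c, by omega, h, fun t ht => hne _ (by omega) (by omega)⟩
    · exact ⟨c + 1, d - c, by omega, by omega, fun t ht => hne _ (by omega) (by omega)⟩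
  · push Not at hv
    exact ⟨0, d + 1, by omega, by omega, fun t ht => hv _ (by omega)⟩

lemma isBlockSet_image_Icc (hp : IsPathSeq G p n) {x y : ℕ} (hxy : x < y) (hy : y < n)
    (hchord : G.Adj (p x) (p y)) : IsBlockSet G ((Finset.Icc x y).image p) := by
  set Q := (Finset.Icc x y).image p
  have mem : ∀ l, x ≤ l → l ≤ y → p l ∈ Q := fun l h₁ h₂ =>
    Finset.mem_image_of_mem p (Finset.mem_Icc.mpr ⟨h₁, h₂⟩)
  have adj : ∀ l, x ≤ l → l < y → G.Adj (p l) (p (l + 1)) := fun l _ h => hp.2 l (by omega)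
  refine ⟨connIn_of_forall_reachIn (mem x le_rfl hxy.le) fun w hw => ?_, fun w hw _ => ?_⟩
  · obtain ⟨i, hi, rfl⟩ := Finset.mem_image.mp hw
    rw [Finset.mem_Icc] at hi
    exact reachIn_of_adj_succ hi.1 (fun l h₁ h₂ => adj l h₁ (by omega))
      (fun l h₁ h₂ => mem l h₁ (by omega))
  obtain ⟨c, hc, rfl⟩ := Finset.mem_image.mp hw
  rw [Finset.mem_Icc] at hc
  -- Deleting `p c` from the cycle leaves the arcs `[x, c)` and `(c, y]`, joined by the chord.
  have mem' : ∀ l, x ≤ l → l ≤ y → l ≠ c → p l ∈ Q.erase (p c) := fun l h₁ h₂ hlc =>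
    Finset.mem_erase.mpr ⟨fun h => hlc (hp.1 (Set.mem_Iio.mpr (by omega))
      (Set.mem_Iio.mpr (by omega)) h), mem l h₁ h₂⟩
  have left : ∀ i, x ≤ i → i < c → ReachIn G (Q.erase (p c)) (p x) (p i) := fun i h₁ h₂ =>
    reachIn_of_adj_succ h₁ (fun l h₃ h₄ => adj l h₃ (by omega))
      (fun l h₃ h₄ => mem' l h₃ (by omega) (by omega))
  have right : ∀ i, c < i → i ≤ y → ReachIn G (Q.erase (p c)) (p i) (p y) := fun i h₁ h₂ =>
    reachIn_of_adj_succ h₂ (fun l h₃ h₄ => adj l (by omega) h₄)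
      (fun l h₃ h₄ => mem' l (by omega) h₄ (by omega))
  rcases eq_or_ne c x with rfl | hcx
  · refine connIn_of_forall_reachIn (mem' y hxy.le le_rfl hxy.ne') fun w hw => ?_
    obtain ⟨i, hi, rfl⟩ := Finset.mem_image.mp (Finset.mem_of_mem_erase hw)
    have hic : i ≠ c := fun h => Finset.ne_of_mem_erase hw (h ▸ rfl)
    rw [Finset.mem_Icc] at hi
    exact (right i (by omega) hi.2).symm
  · refine connIn_of_forall_reachIn (mem' x le_rfl hxy.le hcx.symm) fun w hw => ?_
    obtain ⟨i, hi, rfl⟩ := Finset.mem_image.mp (Finset.mem_of_mem_erase hw)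
    have hic : i ≠ c := fun h => Finset.ne_of_mem_erase hw (h ▸ rfl)
    rw [Finset.mem_Icc] at hi
    rcases lt_or_gt_of_ne hic with h | h
    · exact left i hi.1 h
    · exact (ReachIn.single (mem' x le_rfl hxy.le hcx.symm) (mem' y hxy.le le_rfl (by omega))
        hchord).trans (right i h hi.2).symm

end PathSeq

section Td2

variable {G : SimpleGraph V} {s B : Finset V}

lemma IsBlock.card_lt (hB : IsBlock G s B) (hb : ¬IsBlockSet G s) : B.card < s.card :=
  Finset.card_lt_card <| Finset.ssubset_iff_subset_ne.mpr ⟨hB.1, fun h => hb (h ▸ hB.2.1)⟩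

lemma td2Aux_empty (G : SimpleGraph V) (f : ℕ) : td2Aux G f (∅ : Finset V) = 0 := by
  cases f <;> simp [td2Aux]

lemma td2Aux_congr {f₁ f₂ : ℕ} (h₁ : s.card ≤ f₁) (h₂ : s.card ≤ f₂) :
    td2Aux G f₁ s = td2Aux G f₂ s := by
  induction f₁ generalizing f₂ s with
  | zero => rw [Finset.card_eq_zero.mp (show s.card = 0 by omega), td2Aux_empty, td2Aux_empty]
  | succ f ih =>
    rcases s.eq_empty_or_nonempty with rfl | hs
    · rw [td2Aux_empty, td2Aux_empty]
    obtain ⟨g, rfl⟩ : ∃ g, f₂ = g + 1 := ⟨f₂ - 1, by have := hs.card_pos; omega⟩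
    simp only [td2Aux, dif_neg hs.ne_empty]
    split_ifs with hb
    · refine congrArg (1 + ·) (Finset.inf'_congr _ rfl fun v hv => ih ?_ ?_) <;>
        rw [Finset.card_erase_of_mem hv] <;> omega
    · refine Finset.sup_congr rfl fun B hB => ?_
      have := (Finset.mem_filter.mp hB).2.card_lt hb
      exact ih (by omega) (by omega)

lemma td2On_of_isBlockSet (hb : IsBlockSet G s) :
    td2On G s = 1 + s.inf' hb.1.1 (fun v => td2On G (s.erase v)) := by
  obtain ⟨c, hc⟩ : ∃ c, s.card = c + 1 := ⟨s.card - 1, by have := hb.1.1.card_pos; omega⟩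
  rw [td2On, hc, td2Aux, dif_neg hb.1.1.ne_empty, if_pos hb]
  refine congrArg (1 + ·) (Finset.inf'_congr _ rfl fun v hv => td2Aux_congr ?_ le_rfl)
  rw [Finset.card_erase_of_mem hv]
  omega

lemma td2On_of_not_isBlockSet (hs : s.Nonempty) (hb : ¬IsBlockSet G s) :
    td2On G s = (s.powerset.filter fun B => IsBlock G s B).sup (td2On G) := by
  obtain ⟨c, hc⟩ : ∃ c, s.card = c + 1 := ⟨s.card - 1, by have := hs.card_pos; omega⟩
  rw [td2On, hc, td2Aux, dif_neg hs.ne_empty, if_neg hb]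
  refine Finset.sup_congr rfl fun B hB => td2Aux_congr ?_ le_rfl
  have := (Finset.mem_filter.mp hB).2.card_lt hb
  omega

lemma IsBlockSet.exists_td2On_erase (hb : IsBlockSet G s) :
    ∃ v ∈ s, td2On G s = td2On G (s.erase v) + 1 := by
  obtain ⟨v, hv, he⟩ := Finset.exists_mem_eq_inf' hb.1.1 fun v => td2On G (s.erase v)
  exact ⟨v, hv, by rw [td2On_of_isBlockSet hb, he, add_comm]⟩

lemma td2On_le_of_isBlock (hB : IsBlock G s B) : td2On G B ≤ td2On G s := by
  by_cases hb : IsBlockSet G s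
  · rw [hB.2.2 s hB.1 subset_rfl hb]
  · rw [td2On_of_not_isBlockSet (hB.2.1.1.1.mono hB.1) hb]
    exact Finset.le_sup (f := td2On G) (Finset.mem_filter.mpr ⟨Finset.mem_powerset.mpr hB.1, hB⟩)

lemma td2On_pos (hs : s.Nonempty) : 0 < td2On G s := by
  obtain ⟨x, hx⟩ := hs
  obtain ⟨B, hB, -⟩ :=
    exists_isBlock_superset (isBlockSet_singleton (G := G) x) (Finset.singleton_subset_iff.mpr hx)
  obtain ⟨v, -, hv⟩ := hB.2.1.exists_td2On_erase
  have := td2On_le_of_isBlock hB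
  omega

lemma two_le_td2On {u v : V} (hu : u ∈ s) (hv : v ∈ s) (h : G.Adj u v) : 2 ≤ td2On G s := by
  obtain ⟨B, hB, huvB⟩ :=
    exists_isBlock_superset (isBlockSet_pair h) (Finset.insert_subset hu (by simpa using hv))
  obtain ⟨w, -, hw⟩ := hB.2.1.exists_td2On_erase
  have hne : (B.erase w).Nonempty := by
    rcases eq_or_ne w u with rfl | hwu
    · exact ⟨v, Finset.mem_erase.mpr ⟨h.ne.symm, huvB (by simp)⟩⟩
    · exact ⟨u, Finset.mem_erase.mpr ⟨hwu.symm, huvB (by simp)⟩⟩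
  have := td2On_pos (G := G) hne
  have := td2On_le_of_isBlock hB
  omega

end Td2

section Shortcut

variable {G : SimpleGraph V} {p : ℕ → V} {n N L : ℕ} {a : ℕ → ℕ}

def IsShortcut (G : SimpleGraph V) (p : ℕ → V) (N L : ℕ) (a : ℕ → ℕ) : Prop :=
  StrictMono a ∧ a 0 = 0 ∧ a L = N ∧ ∀ t < L, G.Adj (p (a t)) (p (a (t + 1)))

lemma IsShortcut.skip (ha : IsShortcut G p N L a) {i j : ℕ} (hij : i < j) (hjL : j ≤ L)
    (hadj : G.Adj (p (a i)) (p (a j))) :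
    IsShortcut G p N (L - (j - i - 1)) (a ∘ fun t => if t ≤ i then t else t + (j - i - 1)) := by
  obtain ⟨hmono, h0, hL, hstep⟩ := ha
  refine ⟨hmono.comp (strictMono_nat_of_lt_succ fun t => by split_ifs <;> omega), by simp [h0],
    ?_, fun t ht => ?_⟩
  · simp only [Function.comp, if_neg (show ¬L - (j - i - 1) ≤ i by omega)]
    rwa [show L - (j - i - 1) + (j - i - 1) = L by omega]
  · simp only [Function.comp]
    rcases lt_trichotomy t i with h | rfl | h
    · rw [if_pos h.le, if_pos (show t + 1 ≤ i by omega)]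
      exact hstep t (by omega)
    · rwa [if_pos le_rfl, if_neg (by omega), show t + 1 + (j - t - 1) = j by omega]
    · rw [if_neg (by omega), if_neg (by omega), Nat.add_right_comm]
      exact hstep _ (by omega)

/-- A shortest shortcut of a path is an induced path. -/
lemma exists_isShortcut_hasInducedPathOn (hp : IsPathSeq G p n) (hn : 0 < n) :
    ∃ L a, IsShortcut G p (n - 1) L a ∧ HasInducedPathOn G (L + 1) := by
  have hex : ∃ L a, IsShortcut G p (n - 1) L a :=
    ⟨n - 1, id, strictMono_id, rfl, rfl, fun t ht => hp.2 t (by omega)⟩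
  obtain ⟨a, ha⟩ := Nat.find_spec hex
  set L := Nat.find hex
  have hlt : ∀ t : Fin (L + 1), a t < n := fun t =>
    (ha.1.monotone (Nat.lt_succ_iff.mp t.2)).trans_lt (by rw [ha.2.2.1]; omega)
  have hchord : ∀ t t' : ℕ, t < t' → t' ≤ L → G.Adj (p (a t)) (p (a t')) → t + 1 = t' :=
    fun t t' h h' hadj => by
      by_contra hne
      have := Nat.find_min' hex ⟨_, ha.skip h h' hadj⟩
      omega
  refine ⟨L, a, ha, fun t => p (a t),
    fun t t' h => Fin.ext (ha.1.injective (hp.1 (hlt t) (hlt t') h)),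
    fun t t' => ⟨fun hadj => ?_, ?_⟩⟩
  · rcases lt_trichotomy t t' with h | h | h
    · exact Or.inl (hchord t t' h (by omega) hadj)
    · exact absurd hadj (h ▸ G.irrefl)
    · exact Or.inr (hchord t' t h (by omega) hadj.symm)
  · obtain ⟨t, ht⟩ := t
    obtain ⟨t', ht'⟩ := t'
    rintro (h | h) <;> simp only at h <;> subst h
    · exact ha.2.2.2 t (by omega)
    · exact (ha.2.2.2 t' (by omega)).symm

lemma exists_lt_sub_le_mul_sub (a : ℕ → ℕ) {L : ℕ} (hL : 0 < L) :
    ∃ i < L, a L - a 0 ≤ L * (a (i + 1) - a i) := by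
  induction L with
  | zero => omega
  | succ L ih =>
    rcases Nat.eq_zero_or_pos L with rfl | hL
    · exact ⟨0, one_pos, by simp⟩
    obtain ⟨i, hi, h⟩ := ih hL
    have htri : a (L + 1) - a 0 ≤ (a (L + 1) - a L) + (a L - a 0) := by omega
    rcases le_total (a (i + 1) - a i) (a (L + 1) - a L) with hle | hle
    · refine ⟨L, lt_add_one L, htri.trans ?_⟩
      nlinarith
    · refine ⟨i, by omega, htri.trans ?_⟩
      nlinarith

/-- The `L` segments between consecutive vertices of the shortcut cover the `n - 1` edges of the
path, and each of them closes up with its chord to a cycle. -/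
lemma IsShortcut.exists_isBlock_long_segment {s : Finset V} (hp : IsPathSeq G p n)
    (hs : ∀ i < n, p i ∈ s) (ha : IsShortcut G p (n - 1) L a) (hL : 0 < L) :
    ∃ B x d, IsBlock G s B ∧ 0 < d ∧ n - 1 ≤ L * d ∧ x + d < n ∧ ∀ t ≤ d, p (x + t) ∈ B := by
  obtain ⟨i, hi, hgap⟩ := exists_lt_sub_le_mul_sub a hL
  rw [ha.2.1, ha.2.2.1, Nat.sub_zero] at hgap
  have hlt : a i < a (i + 1) := ha.1 (lt_add_one i)
  have hlast : a (i + 1) ≤ n - 1 := ha.2.2.1 ▸ ha.1.monotone hi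
  obtain ⟨B, hB, hCB⟩ := exists_isBlock_superset
    (isBlockSet_image_Icc hp hlt (by omega) (ha.2.2.2 i hi)) fun w hw => by
      obtain ⟨j, hj, rfl⟩ := Finset.mem_image.mp hw
      exact hs j (by rw [Finset.mem_Icc] at hj; omega)
  exact ⟨B, a i, a (i + 1) - a i, hB, by omega, hgap, by omega,
    fun t ht => hCB (Finset.mem_image_of_mem p (Finset.mem_Icc.mpr ⟨by omega, by omega⟩))⟩

end Shortcut

lemma le_two_mul_max_pow_succ {n L d n' m j : ℕ} (h₁ : n - 1 ≤ L * d) (h₂ : d ≤ 2 * n')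
    (h₃ : n' ≤ (2 * m) ^ j) : n ≤ (2 * max (L + 1) m) ^ (j + 1) := by
  set M := max (L + 1) m
  have hLM : L + 1 ≤ M := le_max_left _ _
  have hX : 1 ≤ (2 * M) ^ j := Nat.one_le_pow _ _ (by omega)
  have hd : d ≤ 2 * (2 * M) ^ j :=
    h₂.trans (by gcongr; exact h₃.trans (Nat.pow_le_pow_left (by omega) j))
  calc n ≤ L * (2 * (2 * M) ^ j) + 1 := by have := Nat.mul_le_mul_left L hd; omega
    _ ≤ (2 * M) ^ (j + 1) := by rw [pow_succ]; nlinarith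

lemma exists_hasInducedPathOn_of_td2On_le {G : SimpleGraph V} (j : ℕ) {s : Finset V}
    (hs : td2On G s ≤ j + 1) {p : ℕ → V} {n : ℕ} (hp : IsPathSeq G p n) (hn : 0 < n)
    (hps : ∀ i < n, p i ∈ s) : ∃ m, 0 < m ∧ n ≤ (2 * m) ^ j ∧ HasInducedPathOn G m := by
  induction j generalizing s p n with
  | zero =>
    obtain ⟨L, a, -, hind⟩ := exists_isShortcut_hasInducedPathOn hp hn
    refine ⟨L + 1, by omega, ?_, hind⟩
    by_contra! h
    rw [pow_zero] at h
    have := two_le_td2On (hps 0 (by omega)) (hps 1 h) (hp.2 0 h)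
    omega
  | succ j ih =>
    obtain ⟨L, a, ha, hind⟩ := exists_isShortcut_hasInducedPathOn hp hn
    rcases Nat.eq_zero_or_pos L with rfl | hL
    · have : n - 1 = 0 := ha.2.2.1 ▸ ha.2.1
      exact ⟨1, one_pos, by rw [show n = 1 by omega]; exact Nat.one_le_two_pow, hind⟩
    obtain ⟨B, x, d, hB, hd, hnd, hxd, hpB⟩ := ha.exists_isBlock_long_segment hp hps hL
    obtain ⟨v, -, hBv⟩ := hB.2.1.exists_td2On_erase
    have hseg : IsPathSeq G (fun t => p (x + t)) (d + 1) := hp.shift (by omega)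
    obtain ⟨o, n', hon, hdn, hav⟩ := exists_subpath_avoiding hseg.1 v
    obtain ⟨m, -, hnm, hm⟩ := ih (s := B.erase v)
      (by have := td2On_le_of_isBlock hB; omega) (hseg.shift hon) (by omega)
      fun t ht => Finset.mem_erase.mpr ⟨hav t ht, hpB _ (by omega)⟩
    refine ⟨max (L + 1) m, by omega, le_two_mul_max_pow_succ hnd hdn hnm, ?_⟩
    rcases max_cases (L + 1) m with ⟨h, -⟩ | ⟨h, -⟩ <;> rwa [h]

lemma rpow_one_div_sub_one_div_two_le {k n m : ℕ} (hk : 1 ≤ k) (hm : 0 < m)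
    (h : n ≤ (2 * m) ^ (k - 1)) : (n : ℝ) ^ ((1 : ℝ) / ((k : ℝ) - 1)) / 2 ≤ m := by
  obtain ⟨e, rfl⟩ : ∃ e, k = e + 1 := ⟨k - 1, by omega⟩
  rw [Nat.add_sub_cancel] at h
  rw [Nat.cast_add, Nat.cast_one, add_sub_cancel_right]
  rcases Nat.eq_zero_or_pos e with rfl | he
  · -- `1 / 0 = 0` in `ℝ`, so the bound reads `1 / 2 ≤ m`.
    have : (1 : ℝ) ≤ m := by exact_mod_cast hm
    simp only [CharP.cast_eq_zero, div_zero, Real.rpow_zero]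
    linarith
  · rw [div_le_iff₀ two_pos]
    calc (n : ℝ) ^ ((1 : ℝ) / e) ≤ (((2 * m : ℕ) : ℝ) ^ e) ^ ((1 : ℝ) / e) :=
          Real.rpow_le_rpow (by positivity) (by exact_mod_cast h) (by positivity)
      _ = m * 2 := by
          rw [one_div, Real.pow_rpow_inv_natCast (by positivity) he.ne']
          push_cast
          ring

theorem td2_forces_induced_path {V : Type} [Fintype V] (G : SimpleGraph V)
    (k n : ℕ) (hk : 1 ≤ k) (hn : 1 ≤ n) (htd : td2 G ≤ k) (hpath : HasPathOn G n) :
    ∃ m : ℕ, (n : ℝ) ^ ((1 : ℝ) / ((k : ℝ) - 1)) / 2 ≤ (m : ℝ) ∧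
      HasInducedPathOn G m := by
  obtain ⟨p, hp⟩ := exists_isPathSeq_of_hasPathOn hn hpath
  obtain ⟨m, hm, hnm, hind⟩ := exists_hasInducedPathOn_of_td2On_le (k - 1) (s := Finset.univ)
    (by rw [Nat.sub_add_cancel hk]; exact htd) hp hn fun _ _ => Finset.mem_univ _
  exact ⟨m, rpow_one_div_sub_one_div_two_le hk hm hnm, hind⟩
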